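/- Let A be a Keigher differential ring with X = Spec^Δ A, and suppose f ∈ O(X) satisfies f(p) ∈ pA_p for every p ∈ X. Then f is nilpotent: there exists n ≥ 1 with f^n(p) = 0 in A_p for all p. -/

import Mathlib

/-!
Locally on a basic open `D(g)` around `p` the section is a fraction `a/b`, and `f(q) ∈ q A_q`
forces `a ∈ q` for every `q ∈ D(g)`; so `a g` lies in every differential prime. Because `A` is
Keigher, the nilradical is a radical differential ideal, hence the intersection of the
differential primes (the usual Zorn argument, with Kaplansky's lemma making colon ideals of
radical differential ideals differential), so `a g` is nilpotent. The sets `D(g)` cover `X`,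
which is quasi-compact because radical differential ideals are generated finitarily; a finite
subcover gives a uniform exponent.
-/

/-- An ideal is a differential ideal w.r.t. a family of derivation maps `d`. -/
def IsDiffIdeal {A : Type*} [CommRing A] {k : ℕ} (d : Fin k → A → A) (I : Ideal A) : Prop :=
  ∀ i : Fin k, ∀ x ∈ I, d i x ∈ I

/-- The differential spectrum: prime differential ideals, with the Kolchin topology
(the subspace topology induced from the Zariski topology on `PrimeSpectrum`). -/
abbrev DiffSpec {A : Type*} [CommRing A] {k : ℕ} (d : Fin k → A → A) :=
  {p : PrimeSpectrum A // IsDiffIdeal d p.asIdeal}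

/-- A Keigher ring: the radical of every differential ideal is differential. -/
def IsKeigher {A : Type*} [CommRing A] {k : ℕ} (d : Fin k → A → A) : Prop :=
  ∀ I : Ideal A, IsDiffIdeal d I → IsDiffIdeal d I.radical

/-- `radDiffGen d E` is the smallest radical differential ideal containing `E`. -/
def radDiffGen {A : Type*} [CommRing A] {k : ℕ} (d : Fin k → A → A) (E : Set A) : Ideal A :=
  sInf {I : Ideal A | E ⊆ I ∧ I.IsRadical ∧ IsDiffIdeal d I}

/-- A function `X → ⊔_p A_p` is regular if it is locally a quotient `a/b` with `b`
outside every prime differential ideal of the neighborhood. -/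
def RegularLoc {A : Type*} [CommRing A] {k : ℕ} {d : Fin k → A → A}
    (f : ∀ p : DiffSpec d, Localization.AtPrime p.1.asIdeal) : Prop :=
  ∀ p : DiffSpec d, ∃ U : Set (DiffSpec d), IsOpen U ∧ p ∈ U ∧ ∃ a b : A,
    (∀ q ∈ U, b ∉ q.1.asIdeal) ∧
    ∀ q ∈ U, f q * algebraMap A (Localization.AtPrime q.1.asIdeal) b
      = algebraMap A (Localization.AtPrime q.1.asIdeal) a

open Set

section DiffIdeal

variable {A : Type*} [CommRing A] {k : ℕ} {d : Fin k → A → A}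

lemma subset_radDiffGen (E : Set A) : E ⊆ radDiffGen d E :=
  fun _ he => Ideal.mem_sInf.2 fun _ hI => hI.1 he

lemma radDiffGen_isRadical (E : Set A) : (radDiffGen d E).IsRadical := by
  rintro r ⟨n, hn⟩
  exact Ideal.mem_sInf.2 fun I hI => hI.2.1 ⟨n, Ideal.mem_sInf.1 hn hI⟩

lemma isDiffIdeal_radDiffGen (E : Set A) : IsDiffIdeal d (radDiffGen d E) :=
  fun i _ hx => Ideal.mem_sInf.2 fun _ hI => hI.2.2 i _ (Ideal.mem_sInf.1 hx hI)

lemma radDiffGen_le {E : Set A} {I : Ideal A} (hE : E ⊆ I) (hrad : I.IsRadical)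
    (hdiff : IsDiffIdeal d I) : radDiffGen d E ≤ I :=
  sInf_le ⟨hE, hrad, hdiff⟩

lemma radDiffGen_mono {E F : Set A} (h : E ⊆ F) : radDiffGen d E ≤ radDiffGen d F :=
  radDiffGen_le (h.trans (subset_radDiffGen F)) (radDiffGen_isRadical F)
    (isDiffIdeal_radDiffGen F)

lemma exists_finset_mem_radDiffGen_image {ι : Type*} [DecidableEq ι] (g : ι → A) {a : A}
    (ha : a ∈ radDiffGen d (range g)) : ∃ s : Finset ι, a ∈ radDiffGen d (g '' s) := by
  let J : Ideal A :=
    { carrier := {r | ∃ s : Finset ι, r ∈ radDiffGen d (g '' s)}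
      zero_mem' := ⟨∅, Submodule.zero_mem _⟩
      add_mem' := by
        rintro u v ⟨s, hu⟩ ⟨t, hv⟩
        refine ⟨s ∪ t, Submodule.add_mem _ ?_ ?_⟩
        · exact radDiffGen_mono (image_mono (by simp)) hu
        · exact radDiffGen_mono (image_mono (by simp)) hv
      smul_mem' := by
        rintro c u ⟨s, hu⟩
        exact ⟨s, Submodule.smul_mem _ c hu⟩ }
  refine radDiffGen_le (I := J) ?_ ?_ ?_ ha
  · rintro _ ⟨i, rfl⟩
    exact ⟨{i}, subset_radDiffGen _ ⟨i, by simp⟩⟩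
  · rintro r ⟨n, s, hs⟩
    exact ⟨s, radDiffGen_isRadical _ ⟨n, hs⟩⟩
  · rintro i r ⟨s, hs⟩
    exact ⟨s, isDiffIdeal_radDiffGen _ i r hs⟩

lemma sSup_pow_notMem_of_isChain {x : A} {c : Set (Ideal A)}
    (hc : ∀ J ∈ c, J.IsRadical ∧ IsDiffIdeal d J ∧ ∀ n : ℕ, x ^ n ∉ J)
    (hchain : IsChain (· ≤ ·) c) (hne : c.Nonempty) :
    (sSup c).IsRadical ∧ IsDiffIdeal d (sSup c) ∧ ∀ n : ℕ, x ^ n ∉ sSup c := by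
  have hmem {r : A} : r ∈ sSup c ↔ ∃ K ∈ c, r ∈ K :=
    Submodule.mem_sSup_of_directed hne hchain.directedOn
  refine ⟨?_, ?_, ?_⟩
  · rintro r ⟨n, hn⟩
    obtain ⟨K, hK, hnK⟩ := hmem.1 hn
    exact hmem.2 ⟨K, hK, (hc K hK).1 ⟨n, hnK⟩⟩
  · intro i r hr
    obtain ⟨K, hK, hrK⟩ := hmem.1 hr
    exact hmem.2 ⟨K, hK, (hc K hK).2.1 i r hrK⟩
  · intro n hn
    obtain ⟨K, hK, hnK⟩ := hmem.1 hn
    exact (hc K hK).2.2 n hnK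

end DiffIdeal

lemma Ideal.IsRadical.colon_singleton {A : Type*} [CommRing A] {I : Ideal A} (hI : I.IsRadical)
    (x : A) : (I.colon {x}).IsRadical := by
  rintro r ⟨n, hn⟩
  rw [Submodule.mem_colon_singleton, smul_eq_mul] at hn ⊢
  refine hI ⟨n + 1, ?_⟩
  rw [show (r * x) ^ (n + 1) = r ^ n * x * (r * x ^ n) by ring]
  exact I.mul_mem_right _ hn

section Derivations

variable {A : Type*} [CommRing A] {R : Type*} [CommRing R] [Algebra R A] {k : ℕ}
  (δ : Fin k → Derivation R A A)

lemma isDiffIdeal_bot : IsDiffIdeal (fun i => ⇑(δ i)) (⊥ : Ideal A) := by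
  rintro i x rfl
  exact (δ i).map_zero

lemma mul_derivation_mem_of_mul_mem {I : Ideal A} (hrad : I.IsRadical)
    (hdiff : IsDiffIdeal (fun i => ⇑(δ i)) I) {a b : A} (hab : a * b ∈ I) (i : Fin k) :
    a * δ i b ∈ I := by
  have hleib : a * δ i b + b * δ i a ∈ I := by
    simpa [Derivation.leibniz, mul_comm] using hdiff i _ hab
  refine hrad ⟨2, ?_⟩
  rw [show (a * δ i b) ^ 2 = a * δ i b * (a * δ i b + b * δ i a) - a * b * (δ i a * δ i b) by
    ring]
  exact I.sub_mem (I.mul_mem_left _ hleib) (I.mul_mem_right _ hab)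

lemma isDiffIdeal_colon_singleton {I : Ideal A} (hrad : I.IsRadical)
    (hdiff : IsDiffIdeal (fun i => ⇑(δ i)) I) (x : A) :
    IsDiffIdeal (fun i => ⇑(δ i)) (I.colon {x}) := by
  intro i r hr
  rw [Submodule.mem_colon_singleton, smul_eq_mul] at hr ⊢
  rw [mul_comm] at hr ⊢
  exact mul_derivation_mem_of_mul_mem δ hrad hdiff hr i

lemma exists_diffSpec_le_of_forall_pow_notMem {I : Ideal A} (hrad : I.IsRadical)
    (hdiff : IsDiffIdeal (fun i => ⇑(δ i)) I) {x : A} (hx : ∀ n : ℕ, x ^ n ∉ I) :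
    ∃ p : DiffSpec (fun i => ⇑(δ i)), I ≤ p.1.asIdeal ∧ x ∉ p.1.asIdeal := by
  set S : Set (Ideal A) :=
    {J | J.IsRadical ∧ IsDiffIdeal (fun i => ⇑(δ i)) J ∧ ∀ n : ℕ, x ^ n ∉ J}
  have hchain (c) (hc : c ⊆ S) (hc' : IsChain (· ≤ ·) c) (J) (hJ : J ∈ c) :
      ∃ ub ∈ S, ∀ z ∈ c, z ≤ ub :=
    ⟨sSup c, sSup_pow_notMem_of_isChain hc hc' ⟨J, hJ⟩, fun _ hz => le_sSup hz⟩
  obtain ⟨m, hIm, hmax⟩ := zorn_le_nonempty₀ S hchain I ⟨hrad, hdiff, hx⟩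
  obtain ⟨hmrad, hmdiff, hmx⟩ := hmax.prop
  have colon_mem {y : A} (hy : ∀ n : ℕ, x ^ n * y ∉ m) : m.colon {y} ∈ S := by
    refine ⟨hmrad.colon_singleton y, isDiffIdeal_colon_singleton δ hmrad hmdiff y, fun n hn => ?_⟩
    exact hy n (by simpa using hn)
  have le_colon (y : A) : m ≤ m.colon {y} := fun r hr => by
    simpa using m.mul_mem_right y hr
  -- By maximality `m.colon {y} = m` as soon as no `x ^ n * y` lies in `m`: apply this first to
  -- `y = x ^ n`, then to `y = a` for `a ∉ m`.
  have hsat (n : ℕ) {y : A} (hy : x ^ n * y ∈ m) : y ∈ m := by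
    have hcol : m.colon {x ^ n} = m := (hmax.eq_of_le (colon_mem fun l hl => hmx (l + n) (by
      rwa [pow_add])) (le_colon _)).symm
    rw [← hcol, Submodule.mem_colon_singleton, smul_eq_mul, mul_comm]
    exact hy
  have hprime : m.IsPrime := by
    refine ⟨fun htop => hmx 0 (by simp [htop]), fun {a b} hab => or_iff_not_imp_left.2 fun ha => ?_⟩
    have hcol : m.colon {a} = m :=
      (hmax.eq_of_le (colon_mem fun n hn => ha (hsat n hn)) (le_colon a)).symm
    rw [← hcol, Submodule.mem_colon_singleton, smul_eq_mul, mul_comm]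
    exact hab
  exact ⟨⟨⟨m, hprime⟩, hmdiff⟩, hIm, by simpa using hmx 1⟩

lemma mem_radDiffGen_of_forall_diffSpec {E : Set A} {x : A}
    (hx : ∀ p : DiffSpec (fun i => ⇑(δ i)), E ⊆ p.1.asIdeal → x ∈ p.1.asIdeal) :
    x ∈ radDiffGen (fun i => ⇑(δ i)) E := by
  by_contra hxE
  obtain ⟨p, hle, hxp⟩ := exists_diffSpec_le_of_forall_pow_notMem δ (radDiffGen_isRadical E)
    (isDiffIdeal_radDiffGen E) fun n hn => hxE (radDiffGen_isRadical E ⟨n, hn⟩)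
  exact hxp (hx p ((subset_radDiffGen E).trans hle))

lemma IsKeigher.isNilpotent_of_forall_mem (hK : IsKeigher (fun i => ⇑(δ i))) {x : A}
    (hx : ∀ p : DiffSpec (fun i => ⇑(δ i)), x ∈ p.1.asIdeal) : IsNilpotent x := by
  have hle : radDiffGen (fun i => ⇑(δ i)) ∅ ≤ nilradical A :=
    radDiffGen_le (empty_subset _) (Ideal.radical_isRadical ⊥) (hK ⊥ (isDiffIdeal_bot δ))
  exact mem_nilradical.1 (hle (mem_radDiffGen_of_forall_diffSpec δ fun p _ => hx p))

lemma exists_finset_forall_exists_notMem (g : DiffSpec (fun i => ⇑(δ i)) → A)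
    (hg : ∀ p, g p ∉ p.1.asIdeal) : ∃ s : Finset (DiffSpec (fun i => ⇑(δ i))),
      ∀ q : DiffSpec (fun i => ⇑(δ i)), ∃ p ∈ s, g p ∉ q.1.asIdeal := by
  classical
  have hone : (1 : A) ∈ radDiffGen (fun i => ⇑(δ i)) (range g) :=
    mem_radDiffGen_of_forall_diffSpec δ fun p hp => absurd (hp ⟨p, rfl⟩) (hg p)
  obtain ⟨s, hs⟩ := exists_finset_mem_radDiffGen_image g hone
  refine ⟨s, fun q => ?_⟩
  by_contra! hsq
  have hle : radDiffGen (fun i => ⇑(δ i)) (g '' s) ≤ q.1.asIdeal := by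
    refine radDiffGen_le ?_ q.1.isPrime.isRadical q.2
    rintro _ ⟨p, hp, rfl⟩
    exact hsq p hp
  exact q.1.isPrime.ne_top ((Ideal.eq_top_iff_one _).2 (hle hs))

end Derivations

section Localization

variable {A : Type*} [CommRing A]

lemma RegularLoc.exists_basicOpen_fraction {k : ℕ} {d : Fin k → A → A}
    {f : ∀ p : DiffSpec d, Localization.AtPrime p.1.asIdeal} (hf : RegularLoc f)
    (p : DiffSpec d) : ∃ g a b : A, g ∉ p.1.asIdeal ∧ ∀ q : DiffSpec d, g ∉ q.1.asIdeal →
      b ∉ q.1.asIdeal ∧ f q * algebraMap A _ b = algebraMap A _ a := by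
  obtain ⟨U, hU, hpU, a, b, hb, hfab⟩ := hf p
  obtain ⟨V, hV, rfl⟩ := isOpen_induced_iff.1 hU
  obtain ⟨_, ⟨g, rfl⟩, hpg, hgV⟩ :=
    PrimeSpectrum.isTopologicalBasis_basic_opens.exists_subset_of_mem_open hpU hV
  refine ⟨g, a, b, hpg, fun q hq => ?_⟩
  have hqU : q ∈ Subtype.val ⁻¹' V := hgV ((PrimeSpectrum.mem_basicOpen g _).2 hq)
  exact ⟨hb q hqU, hfab q hqU⟩

lemma mem_of_mul_algebraMap_eq {P : Ideal A} [P.IsPrime] {x : Localization.AtPrime P} {a b : A}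
    (hx : x ∈ IsLocalRing.maximalIdeal _) (hxb : x * algebraMap A _ b = algebraMap A _ a) :
    a ∈ P := by
  rw [← IsLocalization.AtPrime.to_map_mem_maximal_iff (Localization.AtPrime P) P a, ← hxb]
  exact Ideal.mul_mem_right _ _ hx

lemma pow_eq_zero_of_mul_algebraMap_eq {S : Type*} [CommRing S] [Algebra A S] {x : S}
    {a b g : A} {n : ℕ} (hg : IsUnit (algebraMap A S g)) (hb : IsUnit (algebraMap A S b))
    (hxb : x * algebraMap A S b = algebraMap A S a) (hag : (a * g) ^ n = 0) : x ^ n = 0 := by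
  have h : x ^ n * (algebraMap A S b * algebraMap A S g) ^ n = 0 := by
    rw [← mul_pow, ← mul_assoc, hxb, ← map_mul, ← map_pow, hag, map_zero]
  exact ((hb.mul hg).pow n).mul_left_eq_zero.1 h

end Localization

theorem stmt14_general {A : Type*} [CommRing A] {k : ℕ} (δ : Fin k → Derivation ℤ A A)
    (hK : IsKeigher (fun i => ⇑(δ i)))
    (f : ∀ p : DiffSpec (fun i => ⇑(δ i)), Localization.AtPrime p.1.asIdeal)
    (hf : RegularLoc f)
    (h : ∀ p, f p ∈ IsLocalRing.maximalIdeal (Localization.AtPrime p.1.asIdeal)) :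
    ∃ n : ℕ, 1 ≤ n ∧ ∀ p, f p ^ n = 0 := by
  classical
  choose g a b hg hfrac using hf.exists_basicOpen_fraction
  have hnil (p) : IsNilpotent (a p * g p) := hK.isNilpotent_of_forall_mem δ fun q => by
    by_cases hgq : g p ∈ q.1.asIdeal
    · exact q.1.asIdeal.mul_mem_left _ hgq
    · exact q.1.asIdeal.mul_mem_right _ (mem_of_mul_algebraMap_eq (h q) (hfrac p q hgq).2)
  choose n hn using hnil
  obtain ⟨s, hs⟩ := exists_finset_forall_exists_notMem δ g hg
  refine ⟨s.sup n + 1, le_add_self, fun q => ?_⟩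
  obtain ⟨p, hps, hgq⟩ := hs q
  obtain ⟨hbq, hfq⟩ := hfrac p q hgq
  have hunit {y : A} (hy : y ∉ q.1.asIdeal) :
      IsUnit (algebraMap A (Localization.AtPrime q.1.asIdeal) y) :=
    (IsLocalization.AtPrime.isUnit_to_map_iff _ q.1.asIdeal y).2 hy
  exact pow_eq_zero_of_mul_algebraMap_eq (hunit hgq) (hunit hbq) hfq
    (pow_eq_zero_of_le (Finset.le_sup hps |>.trans (Nat.le_succ _)) (hn p))

/-- For a Keigher ring `A`, a global section `f ∈ O(X)` with `f(p) ∈ p A_p` for all `p`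
is nilpotent. -/
theorem stmt14 {A : Type*} [CommRing A] {k : ℕ} (δ : Fin k → Derivation ℤ A A)
    (hcomm : ∀ i j a, δ i (δ j a) = δ j (δ i a))
    (hK : IsKeigher (fun i => ⇑(δ i)))
    (f : ∀ p : DiffSpec (fun i => ⇑(δ i)), Localization.AtPrime p.1.asIdeal)
    (hf : RegularLoc f)
    (h : ∀ p, f p ∈ IsLocalRing.maximalIdeal (Localization.AtPrime p.1.asIdeal)) :
    ∃ n : ℕ, 1 ≤ n ∧ ∀ p, f p ^ n = 0 :=
  stmt14_general δ hK f hf h
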